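/- arXiv:1104.5349 — 8 statements merged into one kernel-verified Lean document; each statement's English description precedes it below -/
import Mathlib

section
/- For all real numbers λ and μ, the antisymmetric bilinear bracket on the 4-dimensional real vector space with basis X₁, X₂, X₃, X₄ determined by [X₁,X₂] = λX₁ − λX₂, [X₁,X₃] = μX₂ + λX₄, [X₁,X₄] = μX₂ + λX₃, [X₂,X₃] = μX₁ + λX₄, [X₂,X₄] = μX₁ + λX₃, [X₃,X₄] = −μX₃ + μX₄ satisfies the Jacobi identity, and hence defines a (solvable) real Lie algebra 𝔤. -/
noncomputable section

namespace Norden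

/-- The underlying 4-dimensional real vector space. -/
abbrev V : Type := Fin 4 → ℝ

/-- The basis `X₁, X₂, X₃, X₄` (0-indexed as `X 0, X 1, X 2, X 3`). -/
def X (i : Fin 4) : V := Pi.single i 1

/-- The signature signs `ε₁ = ε₂ = 1`, `ε₃ = ε₄ = -1` of the Norden metric. -/
def eps : Fin 4 → ℝ := ![1, 1, -1, -1]

/-- The Norden metric `g`, diagonal with entries `ε_i` in the basis `X`. -/
def g (x y : V) : ℝ := ∑ i, eps i * x i * y i

/-- The almost complex structure `J` with `JX₁ = X₃`, `JX₂ = X₄`, `JX₃ = -X₁`, `JX₄ = -X₂`. -/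
def J (x : V) : V := ![-x 2, -x 3, x 0, x 1]

/-- The bracket of the two-parameter family `𝔤(λ,μ)`: the antisymmetric bilinear map with
`[X₁,X₂] = λX₁ - λX₂`, `[X₁,X₃] = μX₂ + λX₄`, `[X₁,X₄] = μX₂ + λX₃`,
`[X₂,X₃] = μX₁ + λX₄`, `[X₂,X₄] = μX₁ + λX₃`, `[X₃,X₄] = -μX₃ + μX₄`. -/
def br (l m : ℝ) (x y : V) : V :=
  ![l * (x 0 * y 1 - x 1 * y 0) + m * (x 1 * y 2 - x 2 * y 1) + m * (x 1 * y 3 - x 3 * y 1),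
    -l * (x 0 * y 1 - x 1 * y 0) + m * (x 0 * y 2 - x 2 * y 0) + m * (x 0 * y 3 - x 3 * y 0),
    l * (x 0 * y 3 - x 3 * y 0) + l * (x 1 * y 3 - x 3 * y 1) - m * (x 2 * y 3 - x 3 * y 2),
    l * (x 0 * y 2 - x 2 * y 0) + l * (x 1 * y 2 - x 2 * y 1) + m * (x 2 * y 3 - x 3 * y 2)]

/-- The Koszul (Levi-Civita) connection: the unique bilinear map with
`2g(∇ₓy, z) = g([x,y],z) + g([z,x],y) + g([z,y],x)`, written out componentwise using
that `g` is diagonal with entries `ε_k` (so `v_k = ε_k g(v, X_k)`). -/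
def nabla (l m : ℝ) (x y : V) : V :=
  fun k => eps k * (1 / 2) *
    (g (br l m x y) (X k) + g (br l m (X k) x) y + g (br l m (X k) y) x)

/-- The tensor `F(x,y,z) = g((∇ₓJ)y, z) = g(∇ₓ(Jy) - J(∇ₓy), z)`. -/
def F (l m : ℝ) (x y z : V) : ℝ := g (nabla l m x (J y) - J (nabla l m x y)) z

/-- The curvature tensor `R(x,y,z,u) = g(∇ₓ∇_y z - ∇_y∇ₓ z - ∇_{[x,y]} z, u)`. -/
def R (l m : ℝ) (x y z u : V) : ℝ :=
  g (nabla l m x (nabla l m y z) - nabla l m y (nabla l m x z) - nabla l m (br l m x y) z) u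

/-- The Ricci tensor `ρ(y,z) = Σ_i ε_i R(X_i, y, z, X_i)`. -/
def ric (l m : ℝ) (y z : V) : ℝ := ∑ i, eps i * R l m (X i) y z (X i)

/-- The scalar curvature `τ = Σ_i ε_i ρ(X_i, X_i)`. -/
def tau (l m : ℝ) : ℝ := ∑ i, eps i * ric l m (X i) (X i)

/-- The associated scalar curvature `τ* = Σ_i ε_i ρ(X_i, JX_i)`. -/
def tauStar (l m : ℝ) : ℝ := ∑ i, eps i * ric l m (X i) (J (X i))

/-- The curvature-like tensor `ψ₁(S)` associated with a symmetric `(0,2)`-tensor `S`. -/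
def psi1 (S : V → V → ℝ) (x y z u : V) : ℝ :=
  g y z * S x u - g x z * S y u + g x u * S y z - g y u * S x z

/-- The tensor `π₁ = (1/2)ψ₁(g)`, i.e. `π₁(x,y,z,u) = g(y,z)g(x,u) - g(x,z)g(y,u)`. -/
def pi1 (x y z u : V) : ℝ := g y z * g x u - g x z * g y u

/-- The Weyl tensor in dimension 4: `W = R - (1/2){ψ₁(ρ) - (τ/3)π₁}`. -/
def W (l m : ℝ) (x y z u : V) : ℝ :=
  R l m x y z u - (1 / 2) * (psi1 (ric l m) x y z u - (tau l m / 3) * pi1 x y z u)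

/-- The square norm `‖∇J‖² = Σ_{i,k,p} ε_i ε_k ε_p F(X_i,X_k,X_p)²`. -/
def normNablaJSq (l m : ℝ) : ℝ :=
  ∑ i, ∑ k, ∑ p, eps i * eps k * eps p * (F l m (X i) (X k) (X p)) ^ 2

/-- The Nijenhuis tensor `N(x,y) = [Jx,Jy] - [x,y] - J[Jx,y] - J[x,Jy]`. -/
def Nij (l m : ℝ) (x y : V) : V :=
  br l m (J x) (J y) - br l m x y - J (br l m (J x) y) - J (br l m x (J y))

/-- The Lie form `θ(x) = Σ_i ε_i F(X_i, X_i, x)` (the `g`-trace of `F`). -/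
def theta (l m : ℝ) (x : V) : ℝ :=
  F l m (X 0) (X 0) x + F l m (X 1) (X 1) x - F l m (X 2) (X 2) x - F l m (X 3) (X 3) x

end Norden

end

open Norden in
/-- For all λ, μ ∈ ℝ, the antisymmetric bilinear bracket on the 4-dimensional
real vector space with basis `X₁,…,X₄` determined by the stated values is bilinear,
antisymmetric, takes the stated values on basis pairs, and satisfies the Jacobi identity
`[x,[y,z]] + [y,[z,x]] + [z,[x,y]] = 0`; hence it defines a real Lie algebra `𝔤`. -/
theorem statement0 (l m : ℝ) :
    -- the stated values on the basis pairs
    (br l m (X 0) (X 1) = l • X 0 - l • X 1) ∧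
    (br l m (X 0) (X 2) = m • X 1 + l • X 3) ∧
    (br l m (X 0) (X 3) = m • X 1 + l • X 2) ∧
    (br l m (X 1) (X 2) = m • X 0 + l • X 3) ∧
    (br l m (X 1) (X 3) = m • X 0 + l • X 2) ∧
    (br l m (X 2) (X 3) = -m • X 2 + m • X 3) ∧
    -- bilinearity
    (∀ (a : ℝ) (x y z : V), br l m (a • x + y) z = a • br l m x z + br l m y z) ∧
    (∀ (a : ℝ) (x y z : V), br l m x (a • y + z) = a • br l m x y + br l m x z) ∧
    -- antisymmetry
    (∀ x y : V, br l m x y = -br l m y x) ∧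
    -- the Jacobi identity
    (∀ x y z : V, br l m x (br l m y z) + br l m y (br l m z x) + br l m z (br l m x y) = 0) := by
  refine ⟨?_, ?_, ?_, ?_, ?_, ?_, ?_, ?_, ?_, ?_⟩
  · funext i; fin_cases i <;> simp [br, X, Pi.single_apply] <;> ring
  · funext i; fin_cases i <;> simp [br, X, Pi.single_apply] <;> ring
  · funext i; fin_cases i <;> simp [br, X, Pi.single_apply] <;> ring
  · funext i; fin_cases i <;> simp [br, X, Pi.single_apply] <;> ring
  · funext i; fin_cases i <;> simp [br, X, Pi.single_apply] <;> ring
  · funext i; fin_cases i <;> simp [br, X, Pi.single_apply] <;> ring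
  · intro a x y z; funext i; fin_cases i <;> simp [br] <;> ring
  · intro a x y z; funext i; fin_cases i <;> simp [br] <;> ring
  · intro x y; funext i; fin_cases i <;> simp [br] <;> ring
  · intro x y z; funext i; fin_cases i <;> simp [br] <;> ring
end

section
/- For the two-parameter family 𝔤(λ,μ), the Koszul connection ∇ satisfies: ∇_{X₁}X₂ = λX₁ + μ(X₃ + X₄), ∇_{X₂}X₁ = λX₂ + μ(X₃ + X₄), ∇_{X₃}X₄ = −λ(X₁ + X₂) − μX₃, ∇_{X₄}X₃ = −λ(X₁ + X₂) − μX₄, ∇_{X₁}X₁ = −λX₂, ∇_{X₂}X₂ = −λX₁, ∇_{X₃}X₃ = μX₄, ∇_{X₄}X₄ = μX₃, ∇_{X₁}X₃ = ∇_{X₁}X₄ = μX₂, ∇_{X₂}X₃ = ∇_{X₂}X₄ = μX₁, ∇_{X₃}X₁ = ∇_{X₃}X₂ = −λX₄, and ∇_{X₄}X₁ = ∇_{X₄}X₂ = −λX₃. -/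
set_option maxHeartbeats 2000000 in
open Norden in
/-- For the family `𝔤(λ,μ)`, the Koszul connection `∇` takes the stated
values on the basis vectors. -/
theorem statement3 (l m : ℝ) :
    nabla l m (X 0) (X 1) = l • X 0 + m • (X 2 + X 3) ∧
    nabla l m (X 1) (X 0) = l • X 1 + m • (X 2 + X 3) ∧
    nabla l m (X 2) (X 3) = -l • (X 0 + X 1) - m • X 2 ∧
    nabla l m (X 3) (X 2) = -l • (X 0 + X 1) - m • X 3 ∧
    nabla l m (X 0) (X 0) = -l • X 1 ∧
    nabla l m (X 1) (X 1) = -l • X 0 ∧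
    nabla l m (X 2) (X 2) = m • X 3 ∧
    nabla l m (X 3) (X 3) = m • X 2 ∧
    nabla l m (X 0) (X 2) = m • X 1 ∧
    nabla l m (X 0) (X 3) = m • X 1 ∧
    nabla l m (X 1) (X 2) = m • X 0 ∧
    nabla l m (X 1) (X 3) = m • X 0 ∧
    nabla l m (X 2) (X 0) = -l • X 3 ∧
    nabla l m (X 2) (X 1) = -l • X 3 ∧
    nabla l m (X 3) (X 0) = -l • X 2 ∧
    nabla l m (X 3) (X 1) = -l • X 2 := by
  have hX : ∀ i j : Fin 4, X i j = if j = i then 1 else 0 := by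
    intro i j; simp [X, Pi.single_apply]
  refine ⟨?_,?_,?_,?_,?_,?_,?_,?_,?_,?_,?_,?_,?_,?_,?_,?_⟩ <;>
  · funext k
    fin_cases k <;>
    · show eps _ * (1/2) * _ = _
      simp only [nabla, g, br, eps, Fin.sum_univ_four, hX, Pi.add_apply, Pi.smul_apply,
        Pi.sub_apply, Pi.neg_apply, smul_eq_mul, Matrix.cons_val_zero, Matrix.cons_val_one,
        Matrix.head_cons, Matrix.cons_val_two, Matrix.tail_cons, Matrix.cons_val_three]
      simp only [show ((⟨0, by omega⟩:Fin 4)) = 0 from rfl,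
        show ((⟨1, by omega⟩:Fin 4)) = 1 from rfl,
        show ((⟨2, by omega⟩:Fin 4)) = 2 from rfl,
        show ((⟨3, by omega⟩:Fin 4)) = 3 from rfl, Fin.reduceEq, reduceIte,
        if_true, if_false, Matrix.cons_val_zero, Matrix.cons_val_one,
        Matrix.head_cons, Matrix.cons_val_two, Matrix.tail_cons, Matrix.cons_val_three]
      ring
end

section
/- For the two-parameter family 𝔤(λ,μ) with its metric g, complex structure J, Koszul connection ∇, and tensor F(x,y,z) = g(∇ₓ(Jy) − J(∇ₓy), z), the components F_{ijk} = F(X_i,X_j,X_k) satisfy: F₁₁₄ = −F₂₁₄ = F₃₁₂ = (1/2)F₃₂₂ = (1/2)F₄₁₁ = F₄₁₂ = −λ and F₁₁₂ = (1/2)F₁₂₂ = (1/2)F₂₁₁ = F₂₁₂ = −F₃₁₄ = F₄₁₄ = μ, and every other component is determined from these by the symmetries F(x,y,z) = F(x,z,y) = F(x,Jy,Jz) (all remaining components not so determined vanish). -/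
namespace Norden

/-- The action of `J` on basis indices: `J` interchanges `X₁ ↔ X₃` and `X₂ ↔ X₄`
(up to sign), i.e. `0 ↔ 2` and `1 ↔ 3` in 0-indexed form. -/
def sig : Fin 4 → Fin 4 := ![2, 3, 0, 1]

/-- The (0-indexed) triples `(i,j,k)` of the essential components `F_{ijk}` listed in the
paper: `F₁₁₄, F₂₁₄, F₃₁₂, F₃₂₂, F₄₁₁, F₄₁₂, F₁₁₂, F₁₂₂, F₂₁₁, F₂₁₂, F₃₁₄, F₄₁₄`. -/
def listedF : List (Fin 4 × Fin 4 × Fin 4) :=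
  [(0, 0, 3), (1, 0, 3), (2, 0, 1), (2, 1, 1), (3, 0, 0), (3, 0, 1),
   (0, 0, 1), (0, 1, 1), (1, 0, 0), (1, 0, 1), (2, 0, 3), (3, 0, 3)]

end Norden

open Norden in
set_option maxHeartbeats 1000000 in
theorem Fexp (l m : ℝ) (x y z : V) : F l m x y z =
  m*x 3*y 3*z 0 - m*x 3*y 2*z 1 - m*x 3*y 1*z 2 + m*x 3*y 0*z 3 - m*x 2*y 3*z 0 + m*x 2*y 2*z 1 + m*x 2*y 1*z 2 - m*x 2*y 0*z 3 + m*x 1*y 3*z 2 + m*x 1*y 2*z 3 + 2*m*x 1*y 2*z 2 + m*x 1*y 1*z 0 + m*x 1*y 0*z 1 + 2*m*x 1*y 0*z 0 + 2*m*x 0*y 3*z 3 + m*x 0*y 3*z 2 + m*x 0*y 2*z 3 + 2*m*x 0*y 1*z 1 + m*x 0*y 1*z 0 + m*x 0*y 0*z 1 - l*x 3*y 3*z 2 - l*x 3*y 2*z 3 - 2*l*x 3*y 2*z 2 - l*x 3*y 1*z 0 - l*x 3*y 0*z 1 - 2*l*x 3*y 0*z 0 - 2*l*x 2*y 3*z 3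 - l*x 2*y 3*z 2 - l*x 2*y 2*z 3 - 2*l*x 2*y 1*z 1 - l*x 2*y 1*z 0 - l*x 2*y 0*z 1 + l*x 1*y 3*z 0 - l*x 1*y 2*z 1 - l*x 1*y 1*z 2 + l*x 1*y 0*z 3 - l*x 0*y 3*z 0 + l*x 0*y 2*z 1 + l*x 0*y 1*z 2 - l*x 0*y 0*z 3 := by
  simp [F, nabla, g, br, J, eps, X, Fin.sum_univ_four, Pi.sub_apply, Pi.single_apply]
  ring

open Norden in
/-- For the family `𝔤(λ,μ)`, the components `F_{ijk} = F(X_i,X_j,X_k)` satisfy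
`F₁₁₄ = -F₂₁₄ = F₃₁₂ = (1/2)F₃₂₂ = (1/2)F₄₁₁ = F₄₁₂ = -λ` and
`F₁₁₂ = (1/2)F₁₂₂ = (1/2)F₂₁₁ = F₂₁₂ = -F₃₁₄ = F₄₁₄ = μ`; every other component is
determined from these by the symmetries `F(x,y,z) = F(x,z,y) = F(x,Jy,Jz)`, and all
remaining components (those whose orbit under these symmetries meets no listed triple)
vanish. -/
theorem statement5 (l m : ℝ) :
    (F l m (X 0) (X 0) (X 3) = -l ∧
     -F l m (X 1) (X 0) (X 3) = -l ∧
     F l m (X 2) (X 0) (X 1) = -l ∧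
     (1 / 2) * F l m (X 2) (X 1) (X 1) = -l ∧
     (1 / 2) * F l m (X 3) (X 0) (X 0) = -l ∧
     F l m (X 3) (X 0) (X 1) = -l) ∧
    (F l m (X 0) (X 0) (X 1) = m ∧
     (1 / 2) * F l m (X 0) (X 1) (X 1) = m ∧
     (1 / 2) * F l m (X 1) (X 0) (X 0) = m ∧
     F l m (X 1) (X 0) (X 1) = m ∧
     -F l m (X 2) (X 0) (X 3) = m ∧
     F l m (X 3) (X 0) (X 3) = m) ∧
    -- the symmetries of F
    (∀ x y z : V, F l m x y z = F l m x z y ∧ F l m x y z = F l m x (J y) (J z)) ∧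
    -- all components not determined from the listed ones by the symmetries vanish
    (∀ i j k : Fin 4,
      (i, j, k) ∉ listedF → (i, k, j) ∉ listedF →
      (i, sig j, sig k) ∉ listedF → (i, sig k, sig j) ∉ listedF →
      F l m (X i) (X j) (X k) = 0) := by
  refine ⟨?_, ?_, ?_, ?_⟩
  · refine ⟨?_, ?_, ?_, ?_, ?_, ?_⟩ <;>
      · rw [Fexp]; simp [X, Pi.single_apply]; try ring
  · refine ⟨?_, ?_, ?_, ?_, ?_, ?_⟩ <;>
      · rw [Fexp]; simp [X, Pi.single_apply]; try ring
  · intro x y z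
    refine ⟨?_, ?_⟩
    · rw [Fexp, Fexp]; ring
    · rw [Fexp, Fexp]; simp [J]; ring
  · intro i j k
    fin_cases i <;> fin_cases j <;> fin_cases k <;> intro h1 h2 h3 h4 <;>
      first
        | exact absurd (by decide) h1
        | exact absurd (by decide) h2
        | exact absurd (by decide) h3
        | exact absurd (by decide) h4
        | (rw [Fexp]; simp [X, Pi.single_apply]; try ring)
end

section
/- For the two-parameter family 𝔤(λ,μ), the tensor F(x,y,z) = g(∇ₓ(Jy) − J(∇ₓy), z) satisfies the symmetries F(x,y,z) = F(x,z,y) = F(x,Jy,Jz) for all x, y, z ∈ 𝔤, the Nijenhuis tensor N(x,y) = [Jx,Jy] − [x,y] − J[Jx,y] − J[x,Jy] vanishes identically, and the Lie form θ(x) = F(X₁,X₁,x) + F(X₂,X₂,x) − F(X₃,X₃,x) − F(X₄,X₄,x) vanishes identically; that is, (G,J,g) belongs to the class W₂ of special complex manifolds with Norden metric. -/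
open Norden in
lemma nabla_eq (l m : ℝ) (x y : V) : nabla l m x y =
    ![l*(x 0*y 1) - l*(x 1*y 1) - l*(x 2*y 3) - l*(x 3*y 2) + m*(x 1*y 2) + m*(x 1*y 3),
      -(l*(x 0*y 0)) + l*(x 1*y 0) - l*(x 2*y 3) - l*(x 3*y 2) + m*(x 0*y 2) + m*(x 0*y 3),
      -(l*(x 3*y 0)) - l*(x 3*y 1) + m*(x 0*y 1) + m*(x 1*y 0) - m*(x 2*y 3) + m*(x 3*y 3),
      -(l*(x 2*y 0)) - l*(x 2*y 1) + m*(x 0*y 1) + m*(x 1*y 0) + m*(x 2*y 2) - m*(x 3*y 2)] := by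
  funext k
  fin_cases k <;>
    simp [nabla, g, br, X, eps, Fin.sum_univ_four, Pi.single_apply] <;> ring

open Norden in
/-- For the family `𝔤(λ,μ)`, the tensor `F` has the symmetries
`F(x,y,z) = F(x,z,y) = F(x,Jy,Jz)`, the Nijenhuis tensor vanishes identically, and the
Lie form `θ` vanishes identically; i.e. `(G,J,g)` belongs to the class `W₂`. -/
theorem statement6 (l m : ℝ) :
    (∀ x y z : V, F l m x y z = F l m x z y ∧ F l m x y z = F l m x (J y) (J z)) ∧
    (∀ x y : V, Nij l m x y = 0) ∧
    (∀ x : V, theta l m x = 0) := by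
  refine ⟨fun x y z => ⟨?_, ?_⟩, fun x y => ?_, fun x => ?_⟩
  · simp only [F, nabla_eq, g, J, eps, Fin.sum_univ_four, Pi.sub_apply, Matrix.cons_val]
    norm_num
    ring_nf
  · simp only [F, nabla_eq, g, J, eps, Fin.sum_univ_four, Pi.sub_apply, Matrix.cons_val]
    norm_num
    ring_nf
  · funext k
    fin_cases k <;> simp [Nij, br, J, Pi.sub_apply] <;> ring
  · simp only [theta, F, nabla_eq, g, J, X, eps, Fin.sum_univ_four, Pi.sub_apply]
    simp [Pi.single_apply]
end

section
/- For the two-parameter family 𝔤(λ,μ), the square norm of ∇J, defined by ‖∇J‖² = Σ_{i,k,p} ε_i ε_k ε_p F(X_i,X_k,X_p)², where ε₁ = ε₂ = 1 and ε₃ = ε₄ = −1, equals −32(λ² − μ²). -/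
open Norden in
/-- For the family `𝔤(λ,μ)`, the square norm of `∇J`,
`‖∇J‖² = Σ_{i,k,p} ε_i ε_k ε_p F(X_i,X_k,X_p)²`, equals `-32(λ² - μ²)`. -/
theorem statement7 (l m : ℝ) :
    normNablaJSq l m = -32 * (l ^ 2 - m ^ 2) := by
  set_option maxHeartbeats 4000000 in
  simp only [normNablaJSq, F, nabla, g, J, br, X, eps, Fin.sum_univ_four, Pi.sub_apply,
    Matrix.cons_val_zero, Matrix.cons_val_one, Matrix.head_cons,
    Matrix.cons_val_two, Matrix.tail_cons, Matrix.cons_val_three,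
    Pi.single_apply]
  set_option maxHeartbeats 4000000 in simp
  ring
end

section
/- For the two-parameter family 𝔤(λ,μ), the curvature tensor R(x,y,z,u) = g(∇ₓ∇_y z − ∇_y∇ₓ z − ∇_{[x,y]} z, u) has essential non-zero components: −(1/2)R₁₂₂₁ = −R₁₃₄₁ = −R₂₃₄₂ = R₃₁₂₃ = (1/2)R₃₄₄₃ = R₄₁₂₄ = λ² + μ²; R₁₃₃₁ = R₁₄₄₁ = R₂₃₃₂ = R₂₄₄₂ = −R₁₃₂₄ = −R₁₄₂₃ = λ² − μ²; and R₁₂₃₁ = R₁₂₄₁ = R₂₁₃₂ = R₂₁₄₂ = −R₃₁₄₃ = −R₃₂₄₃ = −R₄₁₃₄ = −R₄₂₃₄ = 2λμ, where R_{ijks} = R(X_i,X_j,X_k,X_s); all components not obtainable from these by the curvature symmetries vanish. -/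
namespace Norden

/-- The (0-indexed) quadruples of the essential non-zero components `R_{ijks}` listed in
the paper. -/
def listedR : List (Fin 4 × Fin 4 × Fin 4 × Fin 4) :=
  [(0, 1, 1, 0), (0, 2, 3, 0), (1, 2, 3, 1), (2, 0, 1, 2), (2, 3, 3, 2), (3, 0, 1, 3),
   (0, 2, 2, 0), (0, 3, 3, 0), (1, 2, 2, 1), (1, 3, 3, 1), (0, 2, 1, 3), (0, 3, 1, 2),
   (0, 1, 2, 0), (0, 1, 3, 0), (1, 0, 2, 1), (1, 0, 3, 1),
   (2, 0, 3, 2), (2, 1, 3, 2), (3, 0, 2, 3), (3, 1, 2, 3)]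

end Norden

set_option maxHeartbeats 4000000 in
open Norden in
/-- For the family `𝔤(λ,μ)`, the curvature tensor has essential non-zero
components `-(1/2)R₁₂₂₁ = -R₁₃₄₁ = -R₂₃₄₂ = R₃₁₂₃ = (1/2)R₃₄₄₃ = R₄₁₂₄ = λ² + μ²`,
`R₁₃₃₁ = R₁₄₄₁ = R₂₃₃₂ = R₂₄₄₂ = -R₁₃₂₄ = -R₁₄₂₃ = λ² - μ²` and
`R₁₂₃₁ = R₁₂₄₁ = R₂₁₃₂ = R₂₁₄₂ = -R₃₁₄₃ = -R₃₂₄₃ = -R₄₁₃₄ = -R₄₂₃₄ = 2λμ`; all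
components not obtainable from these by the curvature symmetries (antisymmetry in the
first pair, antisymmetry in the second pair and interchange of the two pairs) vanish. -/
theorem statement8 (l m : ℝ) :
    (-(1 / 2) * R l m (X 0) (X 1) (X 1) (X 0) = l ^ 2 + m ^ 2 ∧
     -R l m (X 0) (X 2) (X 3) (X 0) = l ^ 2 + m ^ 2 ∧
     -R l m (X 1) (X 2) (X 3) (X 1) = l ^ 2 + m ^ 2 ∧
     R l m (X 2) (X 0) (X 1) (X 2) = l ^ 2 + m ^ 2 ∧
     (1 / 2) * R l m (X 2) (X 3) (X 3) (X 2) = l ^ 2 + m ^ 2 ∧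
     R l m (X 3) (X 0) (X 1) (X 3) = l ^ 2 + m ^ 2) ∧
    (R l m (X 0) (X 2) (X 2) (X 0) = l ^ 2 - m ^ 2 ∧
     R l m (X 0) (X 3) (X 3) (X 0) = l ^ 2 - m ^ 2 ∧
     R l m (X 1) (X 2) (X 2) (X 1) = l ^ 2 - m ^ 2 ∧
     R l m (X 1) (X 3) (X 3) (X 1) = l ^ 2 - m ^ 2 ∧
     -R l m (X 0) (X 2) (X 1) (X 3) = l ^ 2 - m ^ 2 ∧
     -R l m (X 0) (X 3) (X 1) (X 2) = l ^ 2 - m ^ 2) ∧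
    (R l m (X 0) (X 1) (X 2) (X 0) = 2 * l * m ∧
     R l m (X 0) (X 1) (X 3) (X 0) = 2 * l * m ∧
     R l m (X 1) (X 0) (X 2) (X 1) = 2 * l * m ∧
     R l m (X 1) (X 0) (X 3) (X 1) = 2 * l * m ∧
     -R l m (X 2) (X 0) (X 3) (X 2) = 2 * l * m ∧
     -R l m (X 2) (X 1) (X 3) (X 2) = 2 * l * m ∧
     -R l m (X 3) (X 0) (X 2) (X 3) = 2 * l * m ∧
     -R l m (X 3) (X 1) (X 2) (X 3) = 2 * l * m) ∧
    -- vanishing of all components not obtainable by the curvature symmetries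
    (∀ i j k s : Fin 4,
      (i, j, k, s) ∉ listedR → (j, i, k, s) ∉ listedR →
      (i, j, s, k) ∉ listedR → (j, i, s, k) ∉ listedR →
      (k, s, i, j) ∉ listedR → (s, k, i, j) ∉ listedR →
      (k, s, j, i) ∉ listedR → (s, k, j, i) ∉ listedR →
      R l m (X i) (X j) (X k) (X s) = 0) := by
  refine ⟨⟨?_, ?_, ?_, ?_, ?_, ?_⟩, ⟨?_, ?_, ?_, ?_, ?_, ?_⟩,
    ⟨?_, ?_, ?_, ?_, ?_, ?_, ?_, ?_⟩, ?_⟩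
  case _ => (simp [R, nabla_eq, g, br, X, eps, Fin.sum_univ_four, Pi.single_apply]; ring)
  case _ => (simp [R, nabla_eq, g, br, X, eps, Fin.sum_univ_four, Pi.single_apply]; ring)
  case _ => (simp [R, nabla_eq, g, br, X, eps, Fin.sum_univ_four, Pi.single_apply]; ring)
  case _ => (simp [R, nabla_eq, g, br, X, eps, Fin.sum_univ_four, Pi.single_apply]; ring)
  case _ => (simp [R, nabla_eq, g, br, X, eps, Fin.sum_univ_four, Pi.single_apply]; ring)
  case _ => (simp [R, nabla_eq, g, br, X, eps, Fin.sum_univ_four, Pi.single_apply]; ring)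
  case _ => (simp [R, nabla_eq, g, br, X, eps, Fin.sum_univ_four, Pi.single_apply]; ring)
  case _ => (simp [R, nabla_eq, g, br, X, eps, Fin.sum_univ_four, Pi.single_apply]; ring)
  case _ => (simp [R, nabla_eq, g, br, X, eps, Fin.sum_univ_four, Pi.single_apply]; ring)
  case _ => (simp [R, nabla_eq, g, br, X, eps, Fin.sum_univ_four, Pi.single_apply]; ring)
  case _ => (simp [R, nabla_eq, g, br, X, eps, Fin.sum_univ_four, Pi.single_apply]; ring)
  case _ => (simp [R, nabla_eq, g, br, X, eps, Fin.sum_univ_four, Pi.single_apply]; ring)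
  case _ => (simp [R, nabla_eq, g, br, X, eps, Fin.sum_univ_four, Pi.single_apply]; ring)
  case _ => (simp [R, nabla_eq, g, br, X, eps, Fin.sum_univ_four, Pi.single_apply]; ring)
  case _ => (simp [R, nabla_eq, g, br, X, eps, Fin.sum_univ_four, Pi.single_apply]; ring)
  case _ => (simp [R, nabla_eq, g, br, X, eps, Fin.sum_univ_four, Pi.single_apply]; ring)
  case _ => (simp [R, nabla_eq, g, br, X, eps, Fin.sum_univ_four, Pi.single_apply]; ring)
  case _ => (simp [R, nabla_eq, g, br, X, eps, Fin.sum_univ_four, Pi.single_apply]; ring)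
  case _ => (simp [R, nabla_eq, g, br, X, eps, Fin.sum_univ_four, Pi.single_apply]; ring)
  case _ => (simp [R, nabla_eq, g, br, X, eps, Fin.sum_univ_four, Pi.single_apply]; ring)
  intro i j k s h1 h2 h3 h4 h5 h6 h7 h8
  fin_cases i <;> fin_cases j <;> fin_cases k <;> fin_cases s <;>
    first
    | exact absurd (by decide) h1
    | exact absurd (by decide) h2
    | exact absurd (by decide) h3
    | exact absurd (by decide) h4
    | exact absurd (by decide) h5
    | exact absurd (by decide) h6
    | exact absurd (by decide) h7
    | exact absurd (by decide) h8
    | (simp [R, nabla_eq, g, br, X, eps, Fin.sum_univ_four, Pi.single_apply]; try ring)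
end

section
/- For the two-parameter family 𝔤(λ,μ), the sectional curvatures of the holomorphic basis 2-planes α₁₃ = span{X₁,X₃} and α₂₄ = span{X₂,X₄} satisfy k(α₁₃) = k(α₂₄) = −(λ² − μ²), where k(span{x,y}) = R(x,y,y,x)/π₁(x,y,y,x) and π₁(x,y,z,u) = g(y,z)g(x,u) − g(x,z)g(y,u). -/
open Norden

lemma X0 : X 0 = ![1,0,0,0] := by ext i; fin_cases i <;> simp [X]
lemma X1 : X 1 = ![0,1,0,0] := by ext i; fin_cases i <;> simp [X]
lemma X2 : X 2 = ![0,0,1,0] := by ext i; fin_cases i <;> simp [X]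
lemma X3 : X 3 = ![0,0,0,1] := by ext i; fin_cases i <;> simp [X]

set_option maxHeartbeats 2000000 in
/-- For the family `𝔤(λ,μ)`, the sectional curvatures of the holomorphic
basis 2-planes `α₁₃ = span{X₁,X₃}` and `α₂₄ = span{X₂,X₄}` satisfy
`k(α₁₃) = k(α₂₄) = -(λ² - μ²)`, where `k(span{x,y}) = R(x,y,y,x)/π₁(x,y,y,x)`. -/
theorem statement10 (l m : ℝ) :
    R l m (X 0) (X 2) (X 2) (X 0) / pi1 (X 0) (X 2) (X 2) (X 0) = -(l ^ 2 - m ^ 2) ∧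
    R l m (X 1) (X 3) (X 3) (X 1) / pi1 (X 1) (X 3) (X 3) (X 1) = -(l ^ 2 - m ^ 2) := by
  have h : ∀ v : V, v = ![v 0, v 1, v 2, v 3] := by
    intro v; ext i; fin_cases i <;> simp
  constructor <;>
  · rw [R, pi1]
    rw [h (nabla l m _ _), h (nabla l m _ _), h (nabla l m _ _), h (br l m _ _)]
    simp only [nabla, br, g, X0, X1, X2, X3, eps, Fin.sum_univ_four, Fin.isValue,
      Matrix.cons_val_zero, Matrix.cons_val_one, Matrix.head_cons,
      Matrix.cons_val_two, Matrix.tail_cons, Matrix.cons_val_three, Pi.sub_apply]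
    norm_num
    ring
end

section
/- For the two-parameter family 𝔤(λ,μ) with dim = 2n = 4, the Weyl tensor W = R − (1/2){ψ₁(ρ) − (τ/3)π₁} has essential non-zero components (1/2)W₁₂₂₁ = W₁₃₃₁ = W₁₄₄₁ = W₂₃₃₂ = W₂₄₄₂ = (1/2)W₃₄₄₃ = −(1/3)W₁₃₂₄ = −(1/3)W₁₄₂₃ = (1/3)(λ² − μ²), where W_{ijks} = W(X_i,X_j,X_k,X_s). -/
noncomputable section

namespace Norden

lemma X0 : X 0 = ![1,0,0,0] := by funext i; fin_cases i <;> simp [X, Pi.single_apply]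
lemma X1 : X 1 = ![0,1,0,0] := by funext i; fin_cases i <;> simp [X, Pi.single_apply]
lemma X2 : X 2 = ![0,0,1,0] := by funext i; fin_cases i <;> simp [X, Pi.single_apply]
lemma X3 : X 3 = ![0,0,0,1] := by funext i; fin_cases i <;> simp [X, Pi.single_apply]

lemma nabla_eq (l m : ℝ) (x y : V) : nabla l m x y =
    ![l*x 0*y 1 - l*x 1*y 1 - l*x 2*y 3 - l*x 3*y 2 + m*x 1*y 2 + m*x 1*y 3,
      -(l*x 0*y 0) + l*x 1*y 0 - l*x 2*y 3 - l*x 3*y 2 + m*x 0*y 2 + m*x 0*y 3,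
      -(l*x 3*y 0) - l*x 3*y 1 + m*x 0*y 1 + m*x 1*y 0 - m*x 2*y 3 + m*x 3*y 3,
      -(l*x 2*y 0) - l*x 2*y 1 + m*x 0*y 1 + m*x 1*y 0 + m*x 2*y 2 - m*x 3*y 2] := by
  have h0 : nabla l m x y 0 = l*x 0*y 1 - l*x 1*y 1 - l*x 2*y 3 - l*x 3*y 2 + m*x 1*y 2 + m*x 1*y 3 := by
    simp only [nabla, br, g, X0, X1, X2, X3, eps, Fin.sum_univ_four,
      Matrix.cons_val_zero, Matrix.cons_val_one, Matrix.head_cons, Matrix.cons_val_two,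
      Matrix.tail_cons, Matrix.cons_val_three]
    ring
  have h1 : nabla l m x y 1 = -(l*x 0*y 0) + l*x 1*y 0 - l*x 2*y 3 - l*x 3*y 2 + m*x 0*y 2 + m*x 0*y 3 := by
    simp only [nabla, br, g, X0, X1, X2, X3, eps, Fin.sum_univ_four,
      Matrix.cons_val_zero, Matrix.cons_val_one, Matrix.head_cons, Matrix.cons_val_two,
      Matrix.tail_cons, Matrix.cons_val_three]
    ring
  have h2 : nabla l m x y 2 = -(l*x 3*y 0) - l*x 3*y 1 + m*x 0*y 1 + m*x 1*y 0 - m*x 2*y 3 + m*x 3*y 3 := by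
    simp only [nabla, br, g, X0, X1, X2, X3, eps, Fin.sum_univ_four,
      Matrix.cons_val_zero, Matrix.cons_val_one, Matrix.head_cons, Matrix.cons_val_two,
      Matrix.tail_cons, Matrix.cons_val_three]
    ring
  have h3 : nabla l m x y 3 = -(l*x 2*y 0) - l*x 2*y 1 + m*x 0*y 1 + m*x 1*y 0 + m*x 2*y 2 - m*x 3*y 2 := by
    simp only [nabla, br, g, X0, X1, X2, X3, eps, Fin.sum_univ_four,
      Matrix.cons_val_zero, Matrix.cons_val_one, Matrix.head_cons, Matrix.cons_val_two,
      Matrix.tail_cons, Matrix.cons_val_three]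
    ring
  funext k
  fin_cases k
  · exact h0
  · exact h1
  · exact h2
  · exact h3
lemma ric00 (l m : ℝ) : ric l m (X 0) (X 0) = -4*l^2 := by
  simp only [ric, R, nabla_eq, br, g, X0, X1, X2, X3, eps, Fin.sum_univ_four, Pi.sub_apply,
    Matrix.cons_val_zero, Matrix.cons_val_one, Matrix.head_cons, Matrix.cons_val_two,
    Matrix.tail_cons, Matrix.cons_val_three]
  ring

lemma ric11 (l m : ℝ) : ric l m (X 1) (X 1) = -4*l^2 := by
  simp only [ric, R, nabla_eq, br, g, X0, X1, X2, X3, eps, Fin.sum_univ_four, Pi.sub_apply,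
    Matrix.cons_val_zero, Matrix.cons_val_one, Matrix.head_cons, Matrix.cons_val_two,
    Matrix.tail_cons, Matrix.cons_val_three]
  ring

lemma ric22 (l m : ℝ) : ric l m (X 2) (X 2) = -4*m^2 := by
  simp only [ric, R, nabla_eq, br, g, X0, X1, X2, X3, eps, Fin.sum_univ_four, Pi.sub_apply,
    Matrix.cons_val_zero, Matrix.cons_val_one, Matrix.head_cons, Matrix.cons_val_two,
    Matrix.tail_cons, Matrix.cons_val_three]
  ring

lemma ric33 (l m : ℝ) : ric l m (X 3) (X 3) = -4*m^2 := by
  simp only [ric, R, nabla_eq, br, g, X0, X1, X2, X3, eps, Fin.sum_univ_four, Pi.sub_apply,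
    Matrix.cons_val_zero, Matrix.cons_val_one, Matrix.head_cons, Matrix.cons_val_two,
    Matrix.tail_cons, Matrix.cons_val_three]
  ring

lemma ric01 (l m : ℝ) : ric l m (X 0) (X 1) = -2*l^2-2*m^2 := by
  simp only [ric, R, nabla_eq, br, g, X0, X1, X2, X3, eps, Fin.sum_univ_four, Pi.sub_apply,
    Matrix.cons_val_zero, Matrix.cons_val_one, Matrix.head_cons, Matrix.cons_val_two,
    Matrix.tail_cons, Matrix.cons_val_three]
  ring

lemma ric10 (l m : ℝ) : ric l m (X 1) (X 0) = -2*l^2-2*m^2 := by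
  simp only [ric, R, nabla_eq, br, g, X0, X1, X2, X3, eps, Fin.sum_univ_four, Pi.sub_apply,
    Matrix.cons_val_zero, Matrix.cons_val_one, Matrix.head_cons, Matrix.cons_val_two,
    Matrix.tail_cons, Matrix.cons_val_three]
  ring

lemma ric23 (l m : ℝ) : ric l m (X 2) (X 3) = -2*l^2-2*m^2 := by
  simp only [ric, R, nabla_eq, br, g, X0, X1, X2, X3, eps, Fin.sum_univ_four, Pi.sub_apply,
    Matrix.cons_val_zero, Matrix.cons_val_one, Matrix.head_cons, Matrix.cons_val_two,
    Matrix.tail_cons, Matrix.cons_val_three]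
  ring

lemma ric32 (l m : ℝ) : ric l m (X 3) (X 2) = -2*l^2-2*m^2 := by
  simp only [ric, R, nabla_eq, br, g, X0, X1, X2, X3, eps, Fin.sum_univ_four, Pi.sub_apply,
    Matrix.cons_val_zero, Matrix.cons_val_one, Matrix.head_cons, Matrix.cons_val_two,
    Matrix.tail_cons, Matrix.cons_val_three]
  ring

lemma ric02 (l m : ℝ) : ric l m (X 0) (X 2) = 4*l*m := by
  simp only [ric, R, nabla_eq, br, g, X0, X1, X2, X3, eps, Fin.sum_univ_four, Pi.sub_apply,
    Matrix.cons_val_zero, Matrix.cons_val_one, Matrix.head_cons, Matrix.cons_val_two,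
    Matrix.tail_cons, Matrix.cons_val_three]
  ring

lemma ric03 (l m : ℝ) : ric l m (X 0) (X 3) = 4*l*m := by
  simp only [ric, R, nabla_eq, br, g, X0, X1, X2, X3, eps, Fin.sum_univ_four, Pi.sub_apply,
    Matrix.cons_val_zero, Matrix.cons_val_one, Matrix.head_cons, Matrix.cons_val_two,
    Matrix.tail_cons, Matrix.cons_val_three]
  ring

lemma ric12 (l m : ℝ) : ric l m (X 1) (X 2) = 4*l*m := by
  simp only [ric, R, nabla_eq, br, g, X0, X1, X2, X3, eps, Fin.sum_univ_four, Pi.sub_apply,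
    Matrix.cons_val_zero, Matrix.cons_val_one, Matrix.head_cons, Matrix.cons_val_two,
    Matrix.tail_cons, Matrix.cons_val_three]
  ring

lemma ric13 (l m : ℝ) : ric l m (X 1) (X 3) = 4*l*m := by
  simp only [ric, R, nabla_eq, br, g, X0, X1, X2, X3, eps, Fin.sum_univ_four, Pi.sub_apply,
    Matrix.cons_val_zero, Matrix.cons_val_one, Matrix.head_cons, Matrix.cons_val_two,
    Matrix.tail_cons, Matrix.cons_val_three]
  ring

lemma ric20 (l m : ℝ) : ric l m (X 2) (X 0) = 4*l*m := by
  simp only [ric, R, nabla_eq, br, g, X0, X1, X2, X3, eps, Fin.sum_univ_four, Pi.sub_apply,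
    Matrix.cons_val_zero, Matrix.cons_val_one, Matrix.head_cons, Matrix.cons_val_two,
    Matrix.tail_cons, Matrix.cons_val_three]
  ring

lemma ric21 (l m : ℝ) : ric l m (X 2) (X 1) = 4*l*m := by
  simp only [ric, R, nabla_eq, br, g, X0, X1, X2, X3, eps, Fin.sum_univ_four, Pi.sub_apply,
    Matrix.cons_val_zero, Matrix.cons_val_one, Matrix.head_cons, Matrix.cons_val_two,
    Matrix.tail_cons, Matrix.cons_val_three]
  ring

lemma ric30 (l m : ℝ) : ric l m (X 3) (X 0) = 4*l*m := by
  simp only [ric, R, nabla_eq, br, g, X0, X1, X2, X3, eps, Fin.sum_univ_four, Pi.sub_apply,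
    Matrix.cons_val_zero, Matrix.cons_val_one, Matrix.head_cons, Matrix.cons_val_two,
    Matrix.tail_cons, Matrix.cons_val_three]
  ring

lemma ric31 (l m : ℝ) : ric l m (X 3) (X 1) = 4*l*m := by
  simp only [ric, R, nabla_eq, br, g, X0, X1, X2, X3, eps, Fin.sum_univ_four, Pi.sub_apply,
    Matrix.cons_val_zero, Matrix.cons_val_one, Matrix.head_cons, Matrix.cons_val_two,
    Matrix.tail_cons, Matrix.cons_val_three]
  ring

lemma Rv0110 (l m : ℝ) : R l m (X 0) (X 1) (X 1) (X 0) = -2*l^2-2*m^2 := by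
  simp only [R, R, nabla_eq, br, g, X0, X1, X2, X3, eps, Fin.sum_univ_four, Pi.sub_apply,
    Matrix.cons_val_zero, Matrix.cons_val_one, Matrix.head_cons, Matrix.cons_val_two,
    Matrix.tail_cons, Matrix.cons_val_three]
  ring

lemma Rv0220 (l m : ℝ) : R l m (X 0) (X 2) (X 2) (X 0) = l^2-m^2 := by
  simp only [R, R, nabla_eq, br, g, X0, X1, X2, X3, eps, Fin.sum_univ_four, Pi.sub_apply,
    Matrix.cons_val_zero, Matrix.cons_val_one, Matrix.head_cons, Matrix.cons_val_two,
    Matrix.tail_cons, Matrix.cons_val_three]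
  ring

lemma Rv0330 (l m : ℝ) : R l m (X 0) (X 3) (X 3) (X 0) = l^2-m^2 := by
  simp only [R, R, nabla_eq, br, g, X0, X1, X2, X3, eps, Fin.sum_univ_four, Pi.sub_apply,
    Matrix.cons_val_zero, Matrix.cons_val_one, Matrix.head_cons, Matrix.cons_val_two,
    Matrix.tail_cons, Matrix.cons_val_three]
  ring

lemma Rv1221 (l m : ℝ) : R l m (X 1) (X 2) (X 2) (X 1) = l^2-m^2 := by
  simp only [R, R, nabla_eq, br, g, X0, X1, X2, X3, eps, Fin.sum_univ_four, Pi.sub_apply,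
    Matrix.cons_val_zero, Matrix.cons_val_one, Matrix.head_cons, Matrix.cons_val_two,
    Matrix.tail_cons, Matrix.cons_val_three]
  ring

lemma Rv1331 (l m : ℝ) : R l m (X 1) (X 3) (X 3) (X 1) = l^2-m^2 := by
  simp only [R, R, nabla_eq, br, g, X0, X1, X2, X3, eps, Fin.sum_univ_four, Pi.sub_apply,
    Matrix.cons_val_zero, Matrix.cons_val_one, Matrix.head_cons, Matrix.cons_val_two,
    Matrix.tail_cons, Matrix.cons_val_three]
  ring

lemma Rv2332 (l m : ℝ) : R l m (X 2) (X 3) (X 3) (X 2) = 2*l^2+2*m^2 := by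
  simp only [R, R, nabla_eq, br, g, X0, X1, X2, X3, eps, Fin.sum_univ_four, Pi.sub_apply,
    Matrix.cons_val_zero, Matrix.cons_val_one, Matrix.head_cons, Matrix.cons_val_two,
    Matrix.tail_cons, Matrix.cons_val_three]
  ring

lemma Rv0213 (l m : ℝ) : R l m (X 0) (X 2) (X 1) (X 3) = -l^2+m^2 := by
  simp only [R, R, nabla_eq, br, g, X0, X1, X2, X3, eps, Fin.sum_univ_four, Pi.sub_apply,
    Matrix.cons_val_zero, Matrix.cons_val_one, Matrix.head_cons, Matrix.cons_val_two,
    Matrix.tail_cons, Matrix.cons_val_three]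
  ring

lemma Rv0312 (l m : ℝ) : R l m (X 0) (X 3) (X 1) (X 2) = -l^2+m^2 := by
  simp only [R, R, nabla_eq, br, g, X0, X1, X2, X3, eps, Fin.sum_univ_four, Pi.sub_apply,
    Matrix.cons_val_zero, Matrix.cons_val_one, Matrix.head_cons, Matrix.cons_val_two,
    Matrix.tail_cons, Matrix.cons_val_three]
  ring

lemma tau_eq (l m : ℝ) : tau l m = -8*l^2 + 8*m^2 := by
  simp only [tau, Fin.sum_univ_four, eps, ric00, ric11, ric22, ric33,
    Matrix.cons_val_zero, Matrix.cons_val_one, Matrix.head_cons, Matrix.cons_val_two,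
    Matrix.tail_cons, Matrix.cons_val_three]
  ring

lemma g_basis (i j : Fin 4) : g (X i) (X j) = if i = j then eps i else 0 := by
  fin_cases i <;> fin_cases j <;>
    simp [g, X0, X1, X2, X3, eps, Fin.sum_univ_four]

end Norden

end

open Norden in
/-- For the family `𝔤(λ,μ)` (with `dim = 2n = 4`), the Weyl tensor
`W = R - (1/2){ψ₁(ρ) - (τ/3)π₁}` has essential non-zero components
`(1/2)W₁₂₂₁ = W₁₃₃₁ = W₁₄₄₁ = W₂₃₃₂ = W₂₄₄₂ = (1/2)W₃₄₄₃ = -(1/3)W₁₃₂₄ = -(1/3)W₁₄₂₃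
 = (1/3)(λ² - μ²)`. -/
theorem statement12 (l m : ℝ) :
    (1 / 2) * W l m (X 0) (X 1) (X 1) (X 0) = (1 / 3) * (l ^ 2 - m ^ 2) ∧
    W l m (X 0) (X 2) (X 2) (X 0) = (1 / 3) * (l ^ 2 - m ^ 2) ∧
    W l m (X 0) (X 3) (X 3) (X 0) = (1 / 3) * (l ^ 2 - m ^ 2) ∧
    W l m (X 1) (X 2) (X 2) (X 1) = (1 / 3) * (l ^ 2 - m ^ 2) ∧
    W l m (X 1) (X 3) (X 3) (X 1) = (1 / 3) * (l ^ 2 - m ^ 2) ∧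
    (1 / 2) * W l m (X 2) (X 3) (X 3) (X 2) = (1 / 3) * (l ^ 2 - m ^ 2) ∧
    -(1 / 3) * W l m (X 0) (X 2) (X 1) (X 3) = (1 / 3) * (l ^ 2 - m ^ 2) ∧
    -(1 / 3) * W l m (X 0) (X 3) (X 1) (X 2) = (1 / 3) * (l ^ 2 - m ^ 2) := by
  have h := fun (i j : Fin 4) => g_basis i j
  refine ⟨?_, ?_, ?_, ?_, ?_, ?_, ?_, ?_⟩ <;>
  · simp only [W, psi1, pi1, tau_eq, g_basis, eps,
      ric00, ric01, ric02, ric03, ric10, ric11, ric12, ric13,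
      ric20, ric21, ric22, ric23, ric30, ric31, ric32, ric33,
      Rv0110, Rv0220, Rv0330, Rv1221, Rv1331, Rv2332, Rv0213, Rv0312,
      Matrix.cons_val_zero, Matrix.cons_val_one, Matrix.head_cons, Matrix.cons_val_two,
      Matrix.tail_cons, Matrix.cons_val_three]
    simp only [Fin.reduceEq, if_true, if_false, reduceIte]
    norm_num
    ring
end
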